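/- The weights lambda(s) = Lambda^{-1} E[R(1)|S=s] E[R(0)|S=s] / (nu E[R(1)|S=s] + (1-nu) E[R(0)|S=s]), with Lambda = E[E[R(1)|S] E[R(0)|S] / (nu E[R(1)|S] + (1-nu) E[R(0)|S])], are convex weights: lambda(S) >= 0 almost surely and E[lambda(S)] = 1. Consequently, under conditional independence of (Y(1),Y(0)) and (R(1),R(0)) given S, theta_sfe = E[tau(S) lambda(S)] is a convex weighted average of the strata-level treatment effects tau(s) = E[Y(1) - Y(0) | S = s]. -/

import Mathlib

/-!
Nonnegativity and normalisation of `λ` follow from `q d ≥ 0` (conditional expectations of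
`{0,1}`-valued variables) and the definition of `Λ`. For the weighted-average identity work on
each stratum `{S = s}` of positive mass: conditioning `μ` on it turns conditional independence
given `S` into plain independence, so `qy d s = q d s * E[Y(d) | S = s]` and hence
`qy 1 s * q 0 s - qy 0 s * q 1 s = τ s * q 1 s * q 0 s`. Since `S` is finite-valued, `S` lies
almost surely in such a stratum, and integrating the identity gives the claim.
-/

open MeasureTheory ProbabilityTheory

section Strata

variable {Ω 𝒮 : Type*} {m0 : MeasurableSpace Ω} {μ : Measure Ω} [MeasurableSpace 𝒮]
  [MeasurableSingletonClass 𝒮] {S : Ω → 𝒮} {s : 𝒮}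

theorem MeasureTheory.Integrable.cond {E : Type*} [NormedAddCommGroup E] {f : Ω → E}
    (hf : Integrable f μ) {A : Set Ω} (hA : μ A ≠ 0) : Integrable f μ[|A] :=
  hf.restrict.smul_measure (ENNReal.inv_ne_top.2 hA)

theorem integral_cond_eq_of_condExp_ae_eq_const [IsFiniteMeasure μ] {m : MeasurableSpace Ω}
    (hm : m ≤ m0) {A : Set Ω} (hA : MeasurableSet[m] A) (hμA : μ A ≠ 0) {f : Ω → ℝ}
    (hf : Integrable f μ) {c : ℝ} (hc : ∀ᵐ ω ∂μ, ω ∈ A → μ[f | m] ω = c) :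
    ∫ ω, f ω ∂μ[|A] = c := by
  have hA_real : μ.real A ≠ 0 := (measureReal_ne_zero_iff (measure_ne_top μ A)).2 hμA
  rw [ProbabilityTheory.cond, integral_smul_measure, ← setIntegral_condExp hm hf hA,
    setIntegral_congr_ae (hm A hA) hc, setIntegral_const, ENNReal.toReal_inv, smul_eq_mul,
    smul_eq_mul, ← measureReal_def, inv_mul_cancel_left₀ hA_real]

theorem integral_cond_preimage_singleton_of_condExp_ae_eq [IsFiniteMeasure μ]
    (hS : MeasurableSpace.comap S ‹_› ≤ m0) {f : Ω → ℝ} (hf : Integrable f μ) {g : 𝒮 → ℝ}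
    (hfg : μ[f | MeasurableSpace.comap S ‹_›] =ᵐ[μ] fun ω => g (S ω)) (hs : μ (S ⁻¹' {s}) ≠ 0) :
    ∫ ω, f ω ∂μ[|S ⁻¹' {s}] = g s :=
  integral_cond_eq_of_condExp_ae_eq_const hS ⟨{s}, measurableSet_singleton s, rfl⟩ hs hf
    (hfg.mono fun _ h hω => h.trans (congrArg g hω))

/- Conditional probabilities given `S` are functions of `S`, so their a.e. product rule, read on
the atom `{S = s}`, is the product rule for `μ[|S ⁻¹' {s}]`. -/
theorem ProbabilityTheory.CondIndepFun.indepFun_cond_preimage_singleton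
    [StandardBorelSpace Ω] [IsFiniteMeasure μ]
    {β γ : Type*} [MeasurableSpace β] [MeasurableSpace γ] {f : Ω → β} {g : Ω → γ}
    (hS : MeasurableSpace.comap S ‹_› ≤ m0) (hf : Measurable f) (hg : Measurable g)
    (h : CondIndepFun (MeasurableSpace.comap S ‹_›) hS f g μ) (hs : μ (S ⁻¹' {s}) ≠ 0) :
    IndepFun f g μ[|S ⁻¹' {s}] := by
  rw [condIndepFun_iff_condExp_inter_preimage_eq_mul hf hg] at h
  have hprob : ∀ t, MeasurableSet t → ∀ c : 𝒮 → ℝ,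
      μ⟦t | MeasurableSpace.comap S ‹_›⟧ =ᵐ[μ] (fun ω => c (S ω)) → (μ[|S ⁻¹' {s}]).real t = c s :=
    fun t ht c hc => by
      rw [← integral_indicator_one ht]
      exact integral_cond_preimage_singleton_of_condExp_ae_eq hS
        ((integrable_const 1).indicator ht) hc hs
  have hfactor : ∀ t : Set Ω, ∃ c : 𝒮 → ℝ,
      μ⟦t | MeasurableSpace.comap S ‹_›⟧ = fun ω => c (S ω) := fun t => by
    obtain ⟨c, -, hc⟩ := (stronglyMeasurable_condExp (m := MeasurableSpace.comap S ‹_›)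
      (f := t.indicator fun _ => (1 : ℝ)) (μ := μ)).exists_eq_measurable_comp
    exact ⟨c, hc⟩
  rw [indepFun_iff_measure_inter_preimage_eq_mul]
  intro B C hB hC
  obtain ⟨c₁, hc₁⟩ := hfactor (f ⁻¹' B)
  obtain ⟨c₂, hc₂⟩ := hfactor (g ⁻¹' C)
  have h₁ := hprob _ (hf hB) c₁ hc₁.eventuallyEq
  have h₂ := hprob _ (hg hC) c₂ hc₂.eventuallyEq
  have h₁₂ := hprob _ ((hf hB).inter (hg hC)) (c₁ * c₂) (by
    filter_upwards [h B C hB hC] with ω hω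
    rw [hω, hc₁, hc₂, Pi.mul_apply])
  have := cond_isProbabilityMeasure (μ := μ) hs
  rw [← ENNReal.toReal_eq_toReal_iff' (measure_ne_top _ _)
    (ENNReal.mul_ne_top (measure_ne_top _ _) (measure_ne_top _ _)), ENNReal.toReal_mul]
  simp only [measureReal_def] at h₁ h₂ h₁₂
  rw [h₁, h₂, h₁₂, Pi.mul_apply]

theorem ProbabilityTheory.CondIndepFun.eq_mul_integral_cond_of_condExp_ae_eq
    [StandardBorelSpace Ω] [IsFiniteMeasure μ] {U V : Ω → ℝ} {qU qUV : 𝒮 → ℝ}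
    (hS : MeasurableSpace.comap S ‹_› ≤ m0) (hU : Measurable U) (hV : Measurable V)
    (hU_int : Integrable U μ) (hUV_int : Integrable (fun ω => U ω * V ω) μ)
    (h : CondIndepFun (MeasurableSpace.comap S ‹_›) hS U V μ)
    (hqU : μ[U | MeasurableSpace.comap S ‹_›] =ᵐ[μ] fun ω => qU (S ω))
    (hqUV : μ[fun ω => U ω * V ω | MeasurableSpace.comap S ‹_›] =ᵐ[μ] fun ω => qUV (S ω))
    (hs : μ (S ⁻¹' {s}) ≠ 0) :
    qUV s = qU s * ∫ ω, V ω ∂μ[|S ⁻¹' {s}] := by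
  rw [← integral_cond_preimage_singleton_of_condExp_ae_eq hS hUV_int hqUV hs,
    ← integral_cond_preimage_singleton_of_condExp_ae_eq hS hU_int hqU hs]
  exact (h.indepFun_cond_preimage_singleton hS hU hV hs).integral_mul_eq_mul_integral
    hU.aestronglyMeasurable hV.aestronglyMeasurable

theorem ae_comp_of_forall_measure_preimage_singleton_ne_zero [Countable 𝒮] (hS : Measurable S)
    {p : 𝒮 → Prop} (h : ∀ s, μ (S ⁻¹' {s}) ≠ 0 → p s) : ∀ᵐ ω ∂μ, p (S ω) :=
  ae_of_ae_map hS.aemeasurable <| ae_iff_of_countable.2 fun s hs =>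
    h s (by rwa [Measure.map_apply hS (measurableSet_singleton s)] at hs)

end Strata

theorem lambda_convex_weights_general
    {Ω : Type*} [MeasurableSpace Ω] [StandardBorelSpace Ω]
    (μ : Measure Ω) [IsProbabilityMeasure μ]
    {𝒮 : Type*} [Fintype 𝒮] [MeasurableSpace 𝒮] [MeasurableSingletonClass 𝒮]
    (Y : Fin 2 → Ω → ℝ) (R : Fin 2 → Ω → ℝ) (S : Ω → 𝒮)
    (hYmeas : ∀ d, Measurable (Y d)) (hRmeas : ∀ d, Measurable (R d))
    (hR01 : ∀ d ω, R d ω = 0 ∨ R d ω = 1)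
    (hYint : ∀ d, Integrable (Y d) μ)
    (ν : ℝ) (hν : 0 < ν ∧ ν < 1)
    (hle : MeasurableSpace.comap S inferInstance ≤ ‹MeasurableSpace Ω›)
    (q : Fin 2 → 𝒮 → ℝ) (qy : Fin 2 → 𝒮 → ℝ) (τ : 𝒮 → ℝ)
    (hq : ∀ d, μ[R d | MeasurableSpace.comap S inferInstance]
      =ᵐ[μ] fun ω => q d (S ω))
    (hqy : ∀ d, μ[fun ω => R d ω * Y d ω | MeasurableSpace.comap S inferInstance]
      =ᵐ[μ] fun ω => qy d (S ω))
    (hτ : μ[fun ω => Y 1 ω - Y 0 ω | MeasurableSpace.comap S inferInstance]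
      =ᵐ[μ] fun ω => τ (S ω))
    (Λ : ℝ)
    (hΛ : Λ = ∫ ω, q 1 (S ω) * q 0 (S ω) / (ν * q 1 (S ω) + (1 - ν) * q 0 (S ω)) ∂μ)
    (hΛpos : 0 < Λ)
    (lam : 𝒮 → ℝ)
    (hlam : ∀ s, lam s = Λ⁻¹ * (q 1 s * q 0 s / (ν * q 1 s + (1 - ν) * q 0 s))) :
    (∀ᵐ ω ∂μ, 0 ≤ lam (S ω)) ∧ (∫ ω, lam (S ω) ∂μ = 1) ∧
      (CondIndepFun (MeasurableSpace.comap S inferInstance) hle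
          (fun ω => (Y 1 ω, Y 0 ω)) (fun ω => (R 1 ω, R 0 ω)) μ →
        Λ⁻¹ * ∫ ω, (qy 1 (S ω) * q 0 (S ω) - qy 0 (S ω) * q 1 (S ω))
            / (ν * q 1 (S ω) + (1 - ν) * q 0 (S ω)) ∂μ
          = ∫ ω, τ (S ω) * lam (S ω) ∂μ) := by
  have hRbound : ∀ d ω, 0 ≤ R d ω ∧ ‖R d ω‖ ≤ 1 := fun d ω => by
    rcases hR01 d ω with h | h <;> simp [h]
  have hRint : ∀ d, Integrable (R d) μ := fun d =>
    .of_bound (hRmeas d).aestronglyMeasurable 1 (.of_forall fun ω => (hRbound d ω).2)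
  have hRYint : ∀ d, Integrable (fun ω => R d ω * Y d ω) μ := fun d =>
    (hYint d).bdd_mul (hRmeas d).aestronglyMeasurable (.of_forall fun ω => (hRbound d ω).2)
  refine ⟨?nonneg, ?integral, fun hCI => ?effect⟩
  case nonneg =>
    have hq_nonneg : ∀ d, ∀ᵐ ω ∂μ, 0 ≤ q d (S ω) := fun d => by
      filter_upwards [hq d, condExp_nonneg (m := MeasurableSpace.comap S inferInstance)
        (.of_forall fun ω => (hRbound d ω).1)] with ω hω hω_nonneg
      exact hω ▸ hω_nonneg
    filter_upwards [hq_nonneg 0, hq_nonneg 1] with ω h₀ h₁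
    have hD : 0 ≤ ν * q 1 (S ω) + (1 - ν) * q 0 (S ω) :=
      add_nonneg (mul_nonneg hν.1.le h₁) (mul_nonneg (sub_nonneg.2 hν.2.le) h₀)
    rw [hlam]
    exact mul_nonneg (inv_nonneg.2 hΛpos.le) (div_nonneg (mul_nonneg h₁ h₀) hD)
  case integral =>
    simp_rw [hlam]
    rw [integral_const_mul, ← hΛ, inv_mul_cancel₀ hΛpos.ne']
  case effect =>
    have hCI_RY : ∀ d, CondIndepFun (MeasurableSpace.comap S inferInstance) hle (R d) (Y d) μ := by
      intro d
      fin_cases d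
      exacts [hCI.symm.comp measurable_snd measurable_snd,
        hCI.symm.comp measurable_fst measurable_fst]
    have hstratum : ∀ s, μ (S ⁻¹' {s}) ≠ 0 →
        qy 1 s * q 0 s - qy 0 s * q 1 s = τ s * (q 1 s * q 0 s) := fun s hs => by
      have hqy_eq : ∀ d, qy d s = q d s * ∫ ω, Y d ω ∂μ[|S ⁻¹' {s}] := fun d =>
        (hCI_RY d).eq_mul_integral_cond_of_condExp_ae_eq hle (hRmeas d) (hYmeas d) (hRint d)
          (hRYint d) (hq d) (hqy d) hs
      rw [hqy_eq, hqy_eq, ← integral_cond_preimage_singleton_of_condExp_ae_eq hle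
        ((hYint 1).sub (hYint 0)) hτ hs, Pi.sub_def,
        integral_sub ((hYint 1).cond hs) ((hYint 0).cond hs)]
      ring
    have hae := ae_comp_of_forall_measure_preimage_singleton_ne_zero (μ := μ)
      (measurable_iff_comap_le.2 hle) (p := fun s =>
        (qy 1 s * q 0 s - qy 0 s * q 1 s) / (ν * q 1 s + (1 - ν) * q 0 s)
          = τ s * (q 1 s * q 0 s / (ν * q 1 s + (1 - ν) * q 0 s)))
      fun s hs => by rw [hstratum s hs, mul_div_assoc]
    rw [integral_congr_ae hae, ← integral_const_mul]
    congr 1 with ω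
    rw [hlam]
    ring

/-- The weights `λ(s) = Λ⁻¹ E[R(1)|S=s] E[R(0)|S=s] / (ν E[R(1)|S=s] + (1-ν) E[R(0)|S=s])`
are convex weights: `λ(S) ≥ 0` a.s. and `E[λ(S)] = 1`. Consequently, under conditional
independence of `(Y(1), Y(0))` and `(R(1), R(0))` given `S`, `θ_sfe = E[τ(S) λ(S)]` is a
convex weighted average of the strata-level treatment effects `τ(s) = E[Y(1) - Y(0) | S = s]`. -/
theorem lambda_convex_weights
    {Ω : Type*} [MeasurableSpace Ω] [StandardBorelSpace Ω] [Nonempty Ω]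
    (μ : Measure Ω) [IsProbabilityMeasure μ]
    {𝒮 : Type*} [Fintype 𝒮] [MeasurableSpace 𝒮] [MeasurableSingletonClass 𝒮]
    (Y : Fin 2 → Ω → ℝ) (R : Fin 2 → Ω → ℝ) (S : Ω → 𝒮)
    (hYmeas : ∀ d, Measurable (Y d)) (hRmeas : ∀ d, Measurable (R d))
    (hSmeas : Measurable S)
    (hR01 : ∀ d ω, R d ω = 0 ∨ R d ω = 1)
    (hYint : ∀ d, Integrable (Y d) μ)
    (hRpos : ∀ d, 0 < ∫ ω, R d ω ∂μ)
    (ν : ℝ) (hν : 0 < ν ∧ ν < 1)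
    (hle : MeasurableSpace.comap S inferInstance ≤ ‹MeasurableSpace Ω›)
    (q : Fin 2 → 𝒮 → ℝ) (qy : Fin 2 → 𝒮 → ℝ) (τ : 𝒮 → ℝ)
    (hq : ∀ d, μ[R d | MeasurableSpace.comap S inferInstance]
      =ᵐ[μ] fun ω => q d (S ω))
    (hqy : ∀ d, μ[fun ω => R d ω * Y d ω | MeasurableSpace.comap S inferInstance]
      =ᵐ[μ] fun ω => qy d (S ω))
    (hτ : μ[fun ω => Y 1 ω - Y 0 ω | MeasurableSpace.comap S inferInstance]
      =ᵐ[μ] fun ω => τ (S ω))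
    (Λ : ℝ)
    (hΛ : Λ = ∫ ω, q 1 (S ω) * q 0 (S ω) / (ν * q 1 (S ω) + (1 - ν) * q 0 (S ω)) ∂μ)
    (hΛpos : 0 < Λ)
    (lam : 𝒮 → ℝ)
    (hlam : ∀ s, lam s = Λ⁻¹ * (q 1 s * q 0 s / (ν * q 1 s + (1 - ν) * q 0 s))) :
    (∀ᵐ ω ∂μ, 0 ≤ lam (S ω)) ∧ (∫ ω, lam (S ω) ∂μ = 1) ∧
      (CondIndepFun (MeasurableSpace.comap S inferInstance) hle
          (fun ω => (Y 1 ω, Y 0 ω)) (fun ω => (R 1 ω, R 0 ω)) μ →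
        Λ⁻¹ * ∫ ω, (qy 1 (S ω) * q 0 (S ω) - qy 0 (S ω) * q 1 (S ω))
            / (ν * q 1 (S ω) + (1 - ν) * q 0 (S ω)) ∂μ
          = ∫ ω, τ (S ω) * lam (S ω) ∂μ) :=
  lambda_convex_weights_general μ Y R S hYmeas hRmeas hR01 hYint ν hν hle q qy τ hq hqy hτ Λ hΛ
    hΛpos lam hlam
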